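/- arXiv:1507.06572 — 5 statements merged into one kernel-verified Lean document; each statement's English description precedes it below -/
import Mathlib

section
/- Let G and H be modules over a principal ideal domain R and let I be a partial isomorphism system witnessing G ≅_p H. Then every f ∈ I preserves p-heights for every prime p of R: for all x in the domain of f, |f(x)|_p = |x|_p (where equality includes both sides being ∞). -/
noncomputable section

namespace UlmW

universe u

variable {R : Type*} [CommRing R]

/-- The submodule `p^α M`, defined by transfinite recursion on `α`. -/
def ppow {M : Type u} [AddCommGroup M] [Module R M] (p : R) (α : Ordinal.{u}) :
    Submodule R M :=
  Ordinal.limitRecOn α ⊤ (fun _ S => Submodule.map (LinearMap.lsmul R M p) S)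
    fun β _ ih => ⨅ (γ : Set.Iio β), ih γ.1 γ.2

open scoped Classical in
/-- The `p`-height of `x`, with `⊤` playing the role of `∞`. -/
def pheight {M : Type u} [AddCommGroup M] [Module R M] (p : R) (x : M) :
    WithTop Ordinal.{u} :=
  if h : ∃ α : Ordinal.{u}, x ∈ ppow p α ∧ x ∉ ppow p (α + 1) then (h.choose : WithTop Ordinal)
  else ⊤

/-- `H⁰ = {x : ∃ a ≠ 0, a • x ∈ H}`. -/
def hull {M : Type u} [AddCommGroup M] [Module R M] (H : Submodule R M) : Set M :=
  {x | ∃ a : R, a ≠ 0 ∧ a • x ∈ H}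

/-- `X` is a decomposition set with respect to the single prime `p`. -/
def IsDecompWrt {M : Type u} [AddCommGroup M] [Module R M] (p : R) (X : Set M) : Prop :=
  (LinearIndependent R (fun x : X => (x : M))) ∧
  (∀ x ∈ X, ∀ a : R, a ≠ 0 → a • x ≠ 0) ∧
  (∀ s : Finset M, ↑s ⊆ X → ∀ c : M → R,
    pheight p (∑ x ∈ s, c x • x) = s.inf fun x => pheight p (c x • x))

/-- `X` is a decomposition set (with respect to every prime of `R`). -/
def IsDecompositionSet (R : Type*) [CommRing R] {M : Type u} [AddCommGroup M] [Module R M]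
    (X : Set M) : Prop :=
  ∀ p : R, Prime p → IsDecompWrt p X

/-- partial decomposition basis, heights taken w.r.t. a fixed prime `p`. -/
def IsPDBWrt {M : Type u} [AddCommGroup M] [Module R M] (p : R) (C : Set (Set M)) : Prop :=
  C.Nonempty ∧ (∀ X ∈ C, X.Finite) ∧ (∀ X ∈ C, IsDecompWrt p X) ∧
  ∀ X ∈ C, ∀ x : M, ∃ Y ∈ C, X ⊆ Y ∧ x ∈ hull (Submodule.span R Y)

/-- partial decomposition basis (heights w.r.t. all primes of `R`). -/
def IsPDB (R : Type*) [CommRing R] {M : Type u} [AddCommGroup M] [Module R M] (C : Set (Set M)) : Prop :=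
  C.Nonempty ∧ (∀ X ∈ C, X.Finite) ∧ (∀ X ∈ C, IsDecompositionSet R X) ∧
  ∀ X ∈ C, ∀ x : M, ∃ Y ∈ C, X ⊆ Y ∧ x ∈ hull (Submodule.span R Y)

/-- A partial isomorphism system `I : G ≅_p H`. -/
def IsPartialIsoSystem {M N : Type*} [AddCommGroup M] [Module R M]
    [AddCommGroup N] [Module R N] (I : Set (M →ₗ.[R] N)) : Prop :=
  I.Nonempty ∧
  (∀ f ∈ I, Function.Injective f.toFun) ∧
  (∀ f ∈ I, ∀ a : M, ∃ g ∈ I, f ≤ g ∧ a ∈ g.domain) ∧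
  (∀ f ∈ I, ∀ b : N, ∃ g ∈ I, f ≤ g ∧ ∃ y : g.domain, g y = b)

/-- The Ulm sequence of `x`: `U(x) = (|pⁱ x|)ᵢ`. -/
def UlmSeqOf {M : Type u} [AddCommGroup M] [Module R M] (p : R) (x : M) :
    ℕ → WithTop Ordinal.{u} :=
  fun i => pheight p ((p ^ i) • x)

/-- `u` is an Ulm sequence. -/
def IsUlmSeq (u : ℕ → WithTop Ordinal.{u}) : Prop :=
  ∀ i, (u i = ⊤ → u (i + 1) = ⊤) ∧ (u i ≠ ⊤ → u i < u (i + 1))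

/-- Equivalence of Ulm sequences. -/
def UlmEquiv (u v : ℕ → WithTop Ordinal.{u}) : Prop :=
  ∃ m n : ℕ, ∀ i, u (i + n) = v (i + m)

/-- `X` contains at least `n` elements whose Ulm sequence is equivalent to `u`. -/
def HasAtLeast {M : Type u} [AddCommGroup M] [Module R M] (p : R)
    (u : ℕ → WithTop Ordinal.{u}) (n : ℕ) (X : Set M) : Prop :=
  ∃ s : Finset M, ↑s ⊆ X ∧ n ≤ s.card ∧ ∀ x ∈ s, UlmEquiv (UlmSeqOf p x) u

/-- `ŵ_C(e,G)` where `e` is the class of the Ulm sequence `u`. -/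
def wHat {M : Type u} [AddCommGroup M] [Module R M] (p : R) (C : Set (Set M))
    (u : ℕ → WithTop Ordinal.{u}) : ℕ∞ :=
  sSup {N : ℕ∞ | ∃ n : ℕ, N = (n : ℕ∞) ∧ ∃ X ∈ C, HasAtLeast p u n X}

/-- `x` is proper with respect to `S`. -/
def IsProper {M : Type u} [AddCommGroup M] [Module R M] (p : R) (S : Submodule R M)
    (x : M) : Prop :=
  ∀ s ∈ S, pheight p (x + s) ≤ pheight p x

/-- `H` is a nice submodule. -/
def IsNice {M : Type u} [AddCommGroup M] [Module R M] (p : R) (H : Submodule R M) : Prop :=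
  ∀ x : M, ∃ h ∈ H, ∀ h' ∈ H, pheight p (x + h') ≤ pheight p (x + h)

/-- The Ulm invariant `u_p(σ, M)`: the dimension of `(p^σ M)[p]/(p^{σ+1} M)[p]`
over the residue field `R/(p)`. -/
def uCard (p : R) (M : Type u) [AddCommGroup M] [Module R M] (σ : Ordinal.{u}) :
    Cardinal :=
  let V : Submodule R M := ppow p σ ⊓ Submodule.torsionBy R M p
  let W : Submodule R V := (ppow p (σ + 1) ⊓ Submodule.torsionBy R M p).comap V.subtype
  Module.rank (R ⧸ Ideal.span {p})
    ((V ⧸ W) ⧸ (Ideal.span {p} • (⊤ : Submodule R (V ⧸ W))))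

/-- `û_p(σ, M) = min (u_p(σ, M), ω)`. -/
def uHat (p : R) (M : Type u) [AddCommGroup M] [Module R M] (σ : Ordinal.{u}) : Cardinal :=
  min (uCard p M σ) Cardinal.aleph0

/-- `û_p(∞, M) = min (dim (p^∞ M)[p], ω)`. -/
def uHatInf (p : R) (M : Type u) [AddCommGroup M] [Module R M] : Cardinal :=
  let V : Submodule R M := (⨅ α : Ordinal.{u}, ppow p α) ⊓ Submodule.torsionBy R M p
  min (Module.rank (R ⧸ Ideal.span {p})
    (V ⧸ (Ideal.span {p} • (⊤ : Submodule R V)))) Cardinal.aleph0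

end UlmW

open UlmW

/-- The ideal `(p) ⊆ ℤ` is prime. -/
instance zpSpanPrime (p : ℤ) [hp : Fact (Prime p)] : (Ideal.span {p} : Ideal ℤ).IsPrime :=
  (Ideal.span_singleton_prime hp.out.ne_zero).mpr hp.out

/-- `ℤ_(p)`, the integers localized at the prime `p`. -/
abbrev Zp (p : ℤ) [Fact (Prime p)] : Type :=
  Localization.AtPrime (Ideal.span {p} : Ideal ℤ)

/-!
By transfinite induction on `α`, every `f ∈ I` satisfies `x ∈ p^α G ↔ f x ∈ p^α H`. At a
successor step a witness `x = p • y` is carried forth by extending `f` to some `g ∈ I` whose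
domain contains `y`; conversely, if `f x = p • z`, extend `f` so that `z = g w` and use the
injectivity of `g` to get `x = p • w`. Limit steps are intersections. The height of an element
only depends on which of the submodules `p^α` contain it.
-/

universe u

namespace UlmW

section PPow

variable {R : Type*} [CommRing R] {M N : Type u} [AddCommGroup M] [Module R M]
  [AddCommGroup N] [Module R N] (p : R)

theorem ppow_zero : (ppow p 0 : Submodule R M) = ⊤ :=
  Ordinal.limitRecOn_zero _ _ _

theorem ppow_succ (α : Ordinal.{u}) :
    (ppow p (α + 1) : Submodule R M) = (ppow p α).map (LinearMap.lsmul R M p) :=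
  Ordinal.limitRecOn_add_one _ _ _ _

theorem ppow_limit {β : Ordinal.{u}} (hβ : Order.IsSuccLimit β) :
    (ppow p β : Submodule R M) = ⨅ γ : Set.Iio β, ppow p γ.1 :=
  Ordinal.limitRecOn_limit _ _ _ _ hβ

open scoped Classical in
theorem pheight_eq_of_forall_mem_ppow_iff {x : M} {y : N}
    (h : ∀ α : Ordinal.{u}, x ∈ ppow p α ↔ y ∈ ppow p α) : pheight p x = pheight p y :=
  congrArg (fun P : Ordinal.{u} → Prop =>
      if h : ∃ α, P α ∧ ¬P (α + 1) then (h.choose : WithTop Ordinal.{u}) else ⊤)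
    (funext fun α => propext (h α))

end PPow

section PartialIso

variable {R : Type*} [CommRing R] {G H : Type u} [AddCommGroup G] [Module R G]
  [AddCommGroup H] [Module R H] {I : Set (G →ₗ.[R] H)} (p : R)

def PreservesPPow (I : Set (G →ₗ.[R] H)) (α : Ordinal.{u}) : Prop :=
  ∀ f ∈ I, ∀ x : f.domain, (x : G) ∈ ppow p α ↔ f x ∈ ppow p α

theorem preservesPPow_limit {β : Ordinal.{u}} (hβ : Order.IsSuccLimit β)
    (h : ∀ γ < β, PreservesPPow p I γ) : PreservesPPow p I β := by
  intro f hf x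
  simp only [ppow_limit p hβ, Submodule.mem_iInf]
  exact forall_congr' fun γ => h γ.1 γ.2 f hf x

namespace IsPartialIsoSystem

theorem preservesPPow_succ (hI : IsPartialIsoSystem I) {β : Ordinal.{u}}
    (hβ : PreservesPPow p I β) : PreservesPPow p I (β + 1) := by
  intro f hf x
  simp only [ppow_succ, Submodule.mem_map, LinearMap.lsmul_apply]
  constructor
  · rintro ⟨y, hy, hxy⟩
    obtain ⟨g, hg, hfg, hyg⟩ := hI.2.2.1 f hf y
    refine ⟨g ⟨y, hyg⟩, (hβ g hg ⟨y, hyg⟩).1 hy, ?_⟩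
    rw [hfg.2 (y := ⟨x, hfg.1 x.2⟩) rfl, ← g.map_smul]
    exact congrArg g (Subtype.ext hxy)
  · rintro ⟨z, hz, hfz⟩
    obtain ⟨g, hg, hfg, w, rfl⟩ := hI.2.2.2 f hf z
    have hxw : (⟨x, hfg.1 x.2⟩ : g.domain) = p • w := by
      apply hI.2.1 g hg
      change g _ = g _
      rw [← hfg.2 rfl, g.map_smul, hfz]
    exact ⟨w, (hβ g hg w).2 hz, congrArg Subtype.val hxw.symm⟩

theorem preservesPPow (hI : IsPartialIsoSystem I) (α : Ordinal.{u}) : PreservesPPow p I α := by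
  induction α using WellFoundedLT.induction with
  | ind α IH =>
    rcases Ordinal.zero_or_succ_or_isSuccLimit α with rfl | ⟨β, rfl⟩ | hα
    · intro f _ x
      simp [ppow_zero]
    · rw [Order.succ_eq_add_one]
      exact preservesPPow_succ p hI (IH β (Order.lt_succ β))
    · exact preservesPPow_limit p hα IH

end IsPartialIsoSystem

end PartialIso

end UlmW

open UlmW

theorem statement_0_general {R : Type*} [CommRing R]
    {G H : Type u} [AddCommGroup G] [Module R G] [AddCommGroup H] [Module R H]
    (I : Set (G →ₗ.[R] H)) (hI : IsPartialIsoSystem I)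
    (p : R) (f : G →ₗ.[R] H) (hf : f ∈ I) (x : f.domain) :
    pheight p (f x) = pheight p (x : G) :=
  (pheight_eq_of_forall_mem_ppow_iff p fun α => hI.preservesPPow p α f hf x).symm

theorem statement_0 {R : Type*} [CommRing R] [IsDomain R] [IsPrincipalIdealRing R]
    {G H : Type u} [AddCommGroup G] [Module R G] [AddCommGroup H] [Module R H]
    (I : Set (G →ₗ.[R] H)) (hI : IsPartialIsoSystem I)
    (p : R) (hp : Prime p) (f : G →ₗ.[R] H) (hf : f ∈ I) (x : f.domain) :
    pheight p (f x) = pheight p (x : G) :=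
  statement_0_general I hI p f hf x
end
end

section
/- Let G be a module over a principal ideal domain R with partial decomposition bases C and C', and let X ∈ C and Y ∈ C'. Then there exist decomposition sets X' and Y' in G such that X ⊆ X', Y ⊆ Y', X' is the union of an ascending chain of elements of C, Y' is the union of an ascending chain of elements of C', and ⟨X'⟩⁰ = ⟨Y'⟩⁰. -/
noncomputable section

open UlmW

universe u

open UlmW

/-! The two bases are played against each other: enlarge `X` inside `C` until its hull contains
`Y`, then `Y` inside `C'` until its hull contains the new `X`, and so on. Being a decomposition set
is a condition on finite subsets, so the union of each chain is again one, and each union lies in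
the hull of the other. -/

theorem exists_seq_of_forall_exists_rel {α : Type*} {P : α → Prop} {r : α → α → Prop}
    (h : ∀ a, P a → ∃ b, P b ∧ r a b) {a₀ : α} (ha₀ : P a₀) :
    ∃ f : ℕ → α, f 0 = a₀ ∧ ∀ n, P (f n) ∧ r (f n) (f (n + 1)) := by
  choose! g hgP hgr using h
  have hP : ∀ n, P (g^[n] a₀) := by
    intro n
    induction n with
    | zero => exact ha₀
    | succ n ih => rw [Function.iterate_succ_apply']; exact hgP _ ih
  refine ⟨fun n => g^[n] a₀, rfl, fun n => ⟨hP n, ?_⟩⟩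
  simpa only [Function.iterate_succ_apply'] using hgr _ (hP n)

namespace UlmW

section

variable {R : Type*} [CommRing R] {G : Type u} [AddCommGroup G] [Module R G]

theorem hull_mono {H H' : Submodule R G} (h : H ≤ H') : hull H ⊆ hull H' :=
  fun _ ⟨a, ha, hax⟩ => ⟨a, ha, h hax⟩

theorem iUnion_subset_hull_span_iUnion {S T : ℕ → Set G}
    (h : ∀ n, S n ⊆ hull (Submodule.span R (T (n + 1)))) :
    ⋃ n, S n ⊆ hull (Submodule.span R (⋃ n, T n)) :=
  Set.iUnion_subset fun n =>
    (h n).trans (hull_mono (Submodule.span_mono (Set.subset_iUnion T (n + 1))))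

theorem IsPDB.exists_superset_subset_hull {D : Set (Set G)} (hD : IsPDB R D) {A : Set G}
    (hA : A ∈ D) {s : Set G} (hs : s.Finite) :
    ∃ B ∈ D, A ⊆ B ∧ s ⊆ hull (Submodule.span R B) := by
  refine Set.Finite.induction_on s hs ⟨A, hA, subset_rfl, Set.empty_subset _⟩ ?_
  rintro x s - - ⟨B, hB, hAB, hsB⟩
  obtain ⟨B', hB', hBB', hxB'⟩ := hD.2.2.2 B hB x
  exact ⟨B', hB', hAB.trans hBB', Set.insert_subset hxB'
    (hsB.trans (hull_mono (Submodule.span_mono hBB')))⟩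

theorem IsDecompWrt.iUnion_of_directed {ι : Type*} [Nonempty ι] {p : R} {Xs : ι → Set G}
    (hdir : Directed (· ⊆ ·) Xs) (h : ∀ i, IsDecompWrt p (Xs i)) :
    IsDecompWrt p (⋃ i, Xs i) := by
  refine ⟨linearIndepOn_iUnion_of_directed (v := id) hdir fun i => (h i).1, ?_, ?_⟩
  · intro x hx
    obtain ⟨i, hi⟩ := Set.mem_iUnion.mp hx
    exact (h i).2.1 x hi
  · intro s hs
    obtain ⟨i, hi⟩ := hdir.exists_mem_subset_of_finset_subset_biUnion hs
    exact (h i).2.2 s hi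

theorem IsDecompositionSet.iUnion_of_directed {ι : Type*} [Nonempty ι] {Xs : ι → Set G}
    (hdir : Directed (· ⊆ ·) Xs) (h : ∀ i, IsDecompositionSet R (Xs i)) :
    IsDecompositionSet R (⋃ i, Xs i) :=
  fun p hp => IsDecompWrt.iUnion_of_directed hdir fun i => h i p hp

theorem exists_interleaved_chains {C C' : Set (Set G)} (hC : IsPDB R C) (hC' : IsPDB R C')
    {X Y : Set G} (hX : X ∈ C) (hY : Y ∈ C') :
    ∃ Xs Ys : ℕ → Set G, Xs 0 = X ∧ Ys 0 = Y ∧ ∀ n, Xs n ∈ C ∧ Ys n ∈ C' ∧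
      Xs n ⊆ Xs (n + 1) ∧ Ys n ⊆ Ys (n + 1) ∧
      Xs n ⊆ hull (Submodule.span R (Ys (n + 1))) ∧
      Ys n ⊆ hull (Submodule.span R (Xs (n + 1))) := by
  have step : ∀ q : Set G × Set G, q.1 ∈ C ∧ q.2 ∈ C' → ∃ q' : Set G × Set G,
      (q'.1 ∈ C ∧ q'.2 ∈ C') ∧ q.1 ⊆ q'.1 ∧ q.2 ⊆ q'.2 ∧
        q.1 ⊆ hull (Submodule.span R q'.2) ∧ q.2 ⊆ hull (Submodule.span R q'.1) := by
    rintro ⟨A, B⟩ ⟨hA, hB⟩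
    obtain ⟨A', hA', hAA', hBA'⟩ := hC.exists_superset_subset_hull hA (hC'.2.1 B hB)
    obtain ⟨B', hB', hBB', hA'B'⟩ := hC'.exists_superset_subset_hull hB (hC.2.1 A' hA')
    exact ⟨(A', B'), ⟨hA', hB'⟩, hAA', hBB', hAA'.trans hA'B', hBA'⟩
  obtain ⟨f, hf0, hf⟩ := exists_seq_of_forall_exists_rel step (a₀ := (X, Y)) ⟨hX, hY⟩
  exact ⟨fun n => (f n).1, fun n => (f n).2, congrArg Prod.fst hf0, congrArg Prod.snd hf0,
    fun n => ⟨(hf n).1.1, (hf n).1.2, (hf n).2⟩⟩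

variable [IsDomain R]

def hullSubmodule (H : Submodule R G) : Submodule R G where
  carrier := hull H
  zero_mem' := ⟨1, one_ne_zero, by rw [smul_zero]; exact H.zero_mem⟩
  add_mem' := by
    rintro x y ⟨a, ha, hax⟩ ⟨b, hb, hby⟩
    refine ⟨a * b, mul_ne_zero ha hb, ?_⟩
    rw [smul_add, mul_comm, mul_smul, mul_comm, mul_smul]
    exact H.add_mem (H.smul_mem _ hax) (H.smul_mem _ hby)
  smul_mem' := by
    rintro c x ⟨a, ha, hax⟩
    exact ⟨a, ha, by rw [smul_comm]; exact H.smul_mem _ hax⟩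

theorem hull_span_subset_of_subset_hull {S : Set G} {H : Submodule R G} (h : S ⊆ hull H) :
    hull (Submodule.span R S) ⊆ hull H := by
  have hspan : Submodule.span R S ≤ hullSubmodule H := Submodule.span_le.mpr h
  rintro x ⟨a, ha, hax⟩
  obtain ⟨b, hb, hbax⟩ := hspan hax
  exact ⟨b * a, mul_ne_zero hb ha, by rwa [mul_smul]⟩

end

end UlmW

theorem statement_2_general {R : Type*} [CommRing R] [IsDomain R]
    {G : Type u} [AddCommGroup G] [Module R G]
    (C C' : Set (Set G)) (hC : IsPDB R C) (hC' : IsPDB R C')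
    (X : Set G) (hX : X ∈ C) (Y : Set G) (hY : Y ∈ C') :
    ∃ X' Y' : Set G,
      IsDecompositionSet R X' ∧ IsDecompositionSet R Y' ∧
      X ⊆ X' ∧ Y ⊆ Y' ∧
      (∃ Xs : ℕ → Set G, (∀ i, Xs i ∈ C) ∧ (∀ i, Xs i ⊆ Xs (i + 1)) ∧ X' = ⋃ i, Xs i) ∧
      (∃ Ys : ℕ → Set G, (∀ i, Ys i ∈ C') ∧ (∀ i, Ys i ⊆ Ys (i + 1)) ∧ Y' = ⋃ i, Ys i) ∧
      hull (Submodule.span R X') = hull (Submodule.span R Y') := by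
  obtain ⟨Xs, Ys, rfl, rfl, hchain⟩ := exists_interleaved_chains hC hC' hX hY
  have hXs_mono : Monotone Xs := monotone_nat_of_le_succ fun n => (hchain n).2.2.1
  have hYs_mono : Monotone Ys := monotone_nat_of_le_succ fun n => (hchain n).2.2.2.1
  refine ⟨⋃ n, Xs n, ⋃ n, Ys n,
    IsDecompositionSet.iUnion_of_directed hXs_mono.directed_le
      fun n => hC.2.2.1 _ (hchain n).1,
    IsDecompositionSet.iUnion_of_directed hYs_mono.directed_le
      fun n => hC'.2.2.1 _ (hchain n).2.1,
    Set.subset_iUnion Xs 0, Set.subset_iUnion Ys 0,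
    ⟨Xs, fun n => (hchain n).1, fun n => (hchain n).2.2.1, rfl⟩,
    ⟨Ys, fun n => (hchain n).2.1, fun n => (hchain n).2.2.2.1, rfl⟩, ?_⟩
  exact (hull_span_subset_of_subset_hull
      (iUnion_subset_hull_span_iUnion fun n => (hchain n).2.2.2.2.1)).antisymm
    (hull_span_subset_of_subset_hull
      (iUnion_subset_hull_span_iUnion fun n => (hchain n).2.2.2.2.2))

theorem statement_2 {R : Type*} [CommRing R] [IsDomain R] [IsPrincipalIdealRing R]
    {G : Type u} [AddCommGroup G] [Module R G]
    (C C' : Set (Set G)) (hC : IsPDB R C) (hC' : IsPDB R C')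
    (X : Set G) (hX : X ∈ C) (Y : Set G) (hY : Y ∈ C') :
    ∃ X' Y' : Set G,
      IsDecompositionSet R X' ∧ IsDecompositionSet R Y' ∧
      X ⊆ X' ∧ Y ⊆ Y' ∧
      (∃ Xs : ℕ → Set G, (∀ i, Xs i ∈ C) ∧ (∀ i, Xs i ⊆ Xs (i + 1)) ∧ X' = ⋃ i, Xs i) ∧
      (∃ Ys : ℕ → Set G, (∀ i, Ys i ∈ C') ∧ (∀ i, Ys i ⊆ Ys (i + 1)) ∧ Y' = ⋃ i, Ys i) ∧
      hull (Submodule.span R X') = hull (Submodule.span R Y') :=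
  statement_2_general C C' hC hC' X hX Y hY
end
end

section
/- Suppose G is a module over Z_p (the integers localized at a prime p) with a partial decomposition basis C. Then the collection C̃ = { {a₁x₁, …, aₙxₙ} : {x₁,…,xₙ} ⊆ X for some X ∈ C, with a₁,…,aₙ nonzero scalars } is a partial decomposition basis for G, and C̃ is closed under taking subsets and under replacing elements by nonzero scalar multiples: for any X ∈ C̃, any x₁,…,xₙ ∈ X and any nonzero scalars a₁,…,aₙ, the set {a₁x₁,…,aₙxₙ} belongs to C̃. -/
noncomputable section

open UlmW

universe u

open UlmW

/-- The collection `C̃` of all sets of nonzero multiples of elements of members of `C`. -/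
def Ctilde {R : Type*} [CommRing R] {G : Type u} [AddCommGroup G] [Module R G]
    (C : Set (Set G)) : Set (Set G) :=
  {Y | ∃ X ∈ C, ∃ s : Finset G, ↑s ⊆ X ∧ ∃ a : G → R,
    (∀ x ∈ s, a x ≠ 0) ∧ Y = (fun x => a x • x) '' ↑s}

/-! Rescaling by nonzero scalars preserves linear independence and the height identity of a
decomposition set: a sum over a rescaled set is a sum over the original set with rescaled
coefficients. To extend a rescaled subset of `X ∈ C`, extend `X` to `Y ∈ C` and rescale `Y` by the
same scalars (and by `1` off the subset); over a domain the hull `⟨Y⟩⁰` does not shrink, because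
every element of `Y` has a nonzero multiple in the rescaled set. -/

namespace UlmW

section CommRing

variable {R : Type*} [CommRing R] {M : Type u} [AddCommGroup M] [Module R M]

theorem IsDecompWrt.mono {p : R} {X Y : Set M} (hX : IsDecompWrt p X) (hYX : Y ⊆ X) :
    IsDecompWrt p Y :=
  ⟨LinearIndepOn.mono (v := id) hX.1 hYX, fun x hx => hX.2.1 x (hYX hx),
    fun s hs => hX.2.2 s (hs.trans hYX)⟩

theorem image_smul_mem_ctilde {C : Set (Set M)} {X : Set M} (hX : X ∈ C) {s : Finset M}
    (hsX : ↑s ⊆ X) {a : M → R} (ha : ∀ x ∈ s, a x ≠ 0) :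
    (fun x => a x • x) '' ↑s ∈ Ctilde (R := R) C :=
  ⟨X, hX, s, hsX, a, ha, rfl⟩

theorem smul_image_mem_ctilde [NoZeroDivisors R] {C : Set (Set M)} {Y : Set M}
    (hY : Y ∈ Ctilde (R := R) C) {t : Finset M} (htY : ↑t ⊆ Y) {b : M → R}
    (hb : ∀ y ∈ t, b y ≠ 0) : (fun y => b y • y) '' ↑t ∈ Ctilde (R := R) C := by
  classical
  obtain ⟨X, hX, s, hsX, a, ha, rfl⟩ := hY
  obtain ⟨s', hs's, rfl⟩ := Finset.subset_set_image_iff.mp htY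
  convert image_smul_mem_ctilde hX (hs's.trans hsX) (a := fun x => b (a x • x) * a x)
    fun x hx => mul_ne_zero (hb _ (Finset.mem_image_of_mem _ hx)) (ha x (hs's hx)) using 1
  rw [Finset.coe_image, Set.image_image]
  simp only [smul_smul]

end CommRing

variable {R : Type*} [CommRing R] [IsDomain R] {M : Type u} [AddCommGroup M] [Module R M]

theorem _root_.LinearIndependent.smul_of_ne_zero {ι : Type*} {v : ι → M}
    (hv : LinearIndependent R v) {w : ι → R} (hw : ∀ i, w i ≠ 0) :
    LinearIndependent R fun i => w i • v i := by
  rw [linearIndependent_iff'] at hv ⊢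
  intro s g hg i hi
  have h := hv s (fun i => g i * w i) (by simpa only [mul_smul] using hg) i hi
  exact (mul_eq_zero.mp h).resolve_right (hw i)

theorem IsDecompWrt.image_smul {p : R} {X : Set M} (hX : IsDecompWrt p X) {a : M → R}
    (ha : ∀ x ∈ X, a x ≠ 0) : IsDecompWrt p ((fun x => a x • x) '' X) := by
  classical
  set f : M → M := fun x => a x • x
  have hf : LinearIndepOn R f X := hX.1.smul_of_ne_zero fun x => ha x x.2
  have hinj : Set.InjOn f X := hf.injOn
  refine ⟨(linearIndepOn_iff_image hinj).mp hf, ?_, ?_⟩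
  · rintro _ ⟨x, hx, rfl⟩ b hb
    simpa only [f, smul_smul] using hX.2.1 x hx (b * a x) (mul_ne_zero hb (ha x hx))
  · intro t ht c
    obtain ⟨s, hsX, rfl⟩ := Finset.subset_set_image_iff.mp ht
    rw [Finset.sum_image fun x hx y hy => hinj (hsX hx) (hsX hy), Finset.inf_image]
    simpa only [f, Function.comp_def, smul_smul] using hX.2.2 s hsX fun x => c (f x) * a x

-- Over a domain, `hull K` is therefore the carrier of a submodule.
theorem coe_comap_mkQ_torsion_eq_hull (K : Submodule R M) :
    ((Submodule.torsion R (M ⧸ K)).comap K.mkQ : Set M) = hull K := by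
  ext x
  simp [hull, ← Submodule.Quotient.mk_smul, Submodule.Quotient.mk_eq_zero,
    mem_nonZeroDivisors_iff_ne_zero]

theorem hull_span_subset_hull_span {Y Z : Set M} (hYZ : Y ⊆ hull (Submodule.span R Z)) :
    hull (Submodule.span R Y) ⊆ hull (Submodule.span R Z) := by
  have hspan : (Submodule.span R Y : Set M) ⊆ hull (Submodule.span R Z) := by
    rw [← coe_comap_mkQ_torsion_eq_hull]
    exact Submodule.span_le.mpr (by rwa [coe_comap_mkQ_torsion_eq_hull])
  rintro x ⟨a, ha, hax⟩
  obtain ⟨b, hb, hbax⟩ := hspan hax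
  exact ⟨b * a, mul_ne_zero hb ha, by rwa [mul_smul]⟩

theorem IsPDBWrt.ctilde {p : R} {C : Set (Set M)} (hC : IsPDBWrt p C) :
    IsPDBWrt p (Ctilde (R := R) C) := by
  classical
  obtain ⟨⟨X, hX⟩, hCfin, hCdec, hCext⟩ := hC
  refine ⟨⟨_, image_smul_mem_ctilde hX (s := ∅) (a := 0) (by simp) (by simp)⟩, ?_, ?_, ?_⟩
  · rintro _ ⟨X, -, s, -, a, -, rfl⟩
    exact s.finite_toSet.image _
  · rintro _ ⟨X, hX, s, hsX, a, ha, rfl⟩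
    exact ((hCdec X hX).mono hsX).image_smul ha
  · rintro _ ⟨X, hX, s, hsX, a, ha, rfl⟩ x
    obtain ⟨Y, hY, hXY, hx⟩ := hCext X hX x
    set t := (hCfin Y hY).toFinset
    set b := s.piecewise a 1
    have hb : ∀ y, b y ≠ 0 := fun y => by
      by_cases hy : y ∈ s <;> simp [b, hy, ha]
    refine ⟨(fun y => b y • y) '' ↑t, image_smul_mem_ctilde hY (by simp [t]) fun y _ => hb y,
      ?_, hull_span_subset_hull_span (fun y hy => ⟨b y, hb y, ?_⟩) hx⟩
    · rintro _ ⟨y, hy, rfl⟩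
      exact ⟨y, by simpa [t] using hXY (hsX hy), by simp [b, Finset.piecewise_eq_of_mem _ _ _ hy]⟩
    · exact Submodule.subset_span ⟨y, by simpa [t] using hy, rfl⟩

end UlmW

theorem statement_6 (p : ℤ) [Fact (Prime p)] {G : Type u} [AddCommGroup G]
    [Module (Zp p) G]
    (C : Set (Set G)) (hC : IsPDBWrt (p : Zp p) C) :
    IsPDBWrt (p : Zp p) (Ctilde (R := Zp p) C) ∧
    ∀ Y ∈ Ctilde (R := Zp p) C, ∀ t : Finset G, ↑t ⊆ Y → ∀ b : G → Zp p,
      (∀ x ∈ t, b x ≠ 0) → ((fun x => b x • x) '' ↑t) ∈ Ctilde (R := Zp p) C :=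
  ⟨hC.ctilde, fun _ hY _ htY _ hb => smul_image_mem_ctilde hY htY hb⟩

end
end

section
/- Let G be a module over Z_p (the integers localized at a prime p), let S be a nice submodule of G, and let K be a submodule of G containing S such that K/S is finitely generated and torsion. Then K is a nice submodule of G. -/
noncomputable section

open UlmW

universe u

open UlmW

section LocalizationInt

variable {S : Type*} [CommRing S] [Algebra ℤ S] {Q : Type*} [AddCommGroup Q] [Module S Q]

variable (S) in
theorem algebraMap_int_smul_eq_zsmul (r : ℤ) (z : Q) : algebraMap ℤ S r • z = r • z := by
  rw [eq_intCast, Int.cast_smul_eq_zsmul]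

theorem Module.isTorsion_int_of_isLocalization (D : Submonoid ℤ) [IsLocalization D S]
    (htor : ∀ z : Q, ∃ a : S, a ≠ 0 ∧ a • z = 0) :
    Module.IsTorsion ℤ Q := by
  intro z
  obtain ⟨a, ha, haz⟩ := htor z
  obtain ⟨⟨r, d⟩, hrd⟩ := IsLocalization.mk'_surjective D a
  have hr : algebraMap ℤ S r = a * algebraMap ℤ S d := by
    rw [← hrd]; exact (IsLocalization.mk'_spec S r d).symm
  refine ⟨⟨r, mem_nonZeroDivisors_of_ne_zero fun hr0 => ha ?_⟩, ?_⟩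
  · rw [hr0, map_zero, eq_comm] at hr
    exact (IsLocalization.map_units S d).mul_left_eq_zero.mp hr
  · show r • z = 0
    rw [← algebraMap_int_smul_eq_zsmul S, hr, mul_comm, mul_smul, haz, smul_zero]

/-- The `ℤ`-span of finitely many `S`-generators of a torsion module is a finite group; on it the
denominators act injectively, hence bijectively, so it is already an `S`-submodule. -/
theorem Module.finite_of_fg_torsion_of_isLocalization_int (D : Submonoid ℤ) [IsLocalization D S]
    [Module.Finite S Q]
    (htor : ∀ z : Q, ∃ a : S, a ≠ 0 ∧ a • z = 0) : _root_.Finite Q := by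
  have hZtor := Module.isTorsion_int_of_isLocalization D htor
  obtain ⟨t, ht⟩ := Module.Finite.fg_top (R := S) (M := Q)
  set N := Submodule.span ℤ (t : Set Q)
  have : _root_.Finite N := Module.finite_of_fg_torsion N fun ⟨z, _⟩ => by
    obtain ⟨r, hr⟩ := @hZtor z
    exact ⟨r, Subtype.ext hr⟩
  have hdiv (d : D) (n : Q) (hn : n ∈ N) : ∃ n' ∈ N, algebraMap ℤ S d • n' = n := by
    have hinj : Function.Injective fun m : N => (d : ℤ) • m := fun m m' h => by
      have h' : algebraMap ℤ S d • (m : Q) = algebraMap ℤ S d • (m' : Q) := by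
        simpa only [algebraMap_int_smul_eq_zsmul, Submodule.coe_smul] using congrArg Subtype.val h
      exact Subtype.ext ((IsLocalization.map_units S d).smul_left_cancel.mp h')
    obtain ⟨⟨n', hn'⟩, h⟩ := Finite.injective_iff_surjective.mp hinj ⟨n, hn⟩
    exact ⟨n', hn', by rw [algebraMap_int_smul_eq_zsmul]; exact congrArg Subtype.val h⟩
  let NS : Submodule S Q :=
    { N.toAddSubmonoid with
      smul_mem' := fun c n hn => by
        obtain ⟨⟨r, d⟩, rfl⟩ := IsLocalization.mk'_surjective D c
        obtain ⟨n', hn', rfl⟩ := hdiv d n hn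
        rw [smul_smul, IsLocalization.mk'_spec, algebraMap_int_smul_eq_zsmul]
        exact N.smul_mem r hn' }
  have hNS : NS = ⊤ := top_le_iff.mp (ht ▸ Submodule.span_le.mpr Submodule.subset_span)
  exact _root_.Finite.of_surjective N.subtype fun z =>
    ⟨⟨z, show z ∈ NS from hNS ▸ Submodule.mem_top⟩, rfl⟩

end LocalizationInt

namespace UlmW

/-- Finitely many cosets of `S` fill `K`; the best element of the best coset wins. -/
theorem IsNice.of_le_of_finite_quotient {R : Type*} [CommRing R] {M : Type u} [AddCommGroup M]
    [Module R M] {p : R} {S K : Submodule R M} (hSK : S ≤ K) (hS : IsNice p S)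
    [Finite (K ⧸ S.comap K.subtype)] : IsNice p K := by
  intro x
  choose s hsS hs using fun k : K => hS (x + k)
  obtain ⟨q₀, hq₀⟩ := Finite.exists_max
    fun q : K ⧸ S.comap K.subtype => pheight p (x + q.out + s q.out)
  refine ⟨q₀.out + s q₀.out, K.add_mem q₀.out.2 (hSK (hsS _)), fun h hh => ?_⟩
  set k := (Submodule.Quotient.mk (⟨h, hh⟩ : K) : K ⧸ S.comap K.subtype).out
  have hk : h - k ∈ S := by
    have := (Submodule.Quotient.eq (S.comap K.subtype)).mp
      (Submodule.Quotient.mk_out (Submodule.Quotient.mk (⟨h, hh⟩ : K))).symm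
    simpa using this
  calc pheight p (x + h) = pheight p (x + k + (h - k)) := by congr 1; abel
    _ ≤ pheight p (x + k + s k) := hs k _ hk
    _ ≤ pheight p (x + q₀.out + s q₀.out) := hq₀ _
    _ = pheight p (x + (q₀.out + s q₀.out)) := by rw [add_assoc]

end UlmW

theorem statement_10 (p : ℤ) [Fact (Prime p)] {G : Type u} [AddCommGroup G]
    [Module (Zp p) G]
    (S K : Submodule (Zp p) G) (hSK : S ≤ K) (hS : IsNice (p : Zp p) S)
    (hfg : Module.Finite (Zp p) (↥K ⧸ S.comap K.subtype))
    (htor : ∀ z : ↥K ⧸ S.comap K.subtype, ∃ a : Zp p, a ≠ 0 ∧ a • z = 0) :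
    IsNice (p : Zp p) K := by
  have : Finite (↥K ⧸ S.comap K.subtype) :=
    Module.finite_of_fg_torsion_of_isLocalization_int (Ideal.span {p} : Ideal ℤ).primeCompl htor
  exact hS.of_le_of_finite_quotient hSK

end
end

section
/- If G and H are countable abelian groups and G ≅_p H (there is a nonempty set of isomorphisms between subgroups of G and subgroups of H with the back-and-forth property), then G ≅ H. -/
noncomputable section

open UlmW

universe u

open UlmW

/-!
Countable back-and-forth: enumerate `G` and `H` and, starting from any member of the system,
extend at step `n` so that the `n`-th element of `G` enters the domain and the `n`-th element
of `H` enters the range. The union of the resulting chain is a total, injective and surjective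
partial map, i.e. an isomorphism.
-/

namespace LinearPMap

variable {R M N : Type*} [Ring R] [AddCommGroup M] [Module R M] [AddCommGroup N] [Module R N]

theorem injective_sSup {c : Set (M →ₗ.[R] N)} (hc : DirectedOn (· ≤ ·) c)
    (hinj : ∀ f ∈ c, Function.Injective f) : Function.Injective (LinearPMap.sSup c hc) := by
  rcases c.eq_empty_or_nonempty with rfl | hne
  · have : Subsingleton (LinearPMap.sSup ∅ hc).domain := by
      rw [domain_sSup, Set.image_empty, sSup_empty]
      infer_instance
    exact Function.injective_of_subsingleton _
  intro x y hxy
  obtain ⟨f, hf, hxf⟩ := (mem_domain_sSup_iff hne hc).1 x.2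
  obtain ⟨g, hg, hyg⟩ := (mem_domain_sSup_iff hne hc).1 y.2
  obtain ⟨h, hh, hfh, hgh⟩ := hc f hf g hg
  have hle := LinearPMap.le_sSup hc hh
  have hxy' : h ⟨x, hfh.1 hxf⟩ = h ⟨y, hgh.1 hyg⟩ := by
    rw [hle.2 rfl, hle.2 rfl, hxy]
  exact Subtype.ext (Subtype.mk.inj (hinj h hh hxy'))

theorem nonempty_linearEquiv_of_directedOn {c : Set (M →ₗ.[R] N)} (hc : DirectedOn (· ≤ ·) c)
    (hinj : ∀ f ∈ c, Function.Injective f) (hdom : ∀ a, ∃ f ∈ c, a ∈ f.domain)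
    (hrange : ∀ b, ∃ f ∈ c, ∃ y, f y = b) : Nonempty (M ≃ₗ[R] N) := by
  let Φ := LinearPMap.sSup c hc
  have htop : Φ.domain = ⊤ := by
    refine eq_top_iff.2 fun a _ => ?_
    obtain ⟨f, hf, ha⟩ := hdom a
    exact (LinearPMap.le_sSup hc hf).1 ha
  have hsurj : Function.Surjective Φ := by
    intro b
    obtain ⟨f, hf, y, rfl⟩ := hrange b
    exact ⟨_, LinearPMap.sSup_apply hc hf y⟩
  exact ⟨(LinearEquiv.ofTop _ htop).symm.trans
    (LinearEquiv.ofBijective Φ.toFun ⟨injective_sSup hc hinj, hsurj⟩)⟩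

end LinearPMap

namespace UlmW.IsPartialIsoSystem

variable {R M N : Type*} [CommRing R] [AddCommGroup M] [Module R M] [AddCommGroup N]
  [Module R N] {I : Set (M →ₗ.[R] N)}

theorem exists_extend (hI : IsPartialIsoSystem I) {f : M →ₗ.[R] N} (hf : f ∈ I) (a : M) (b : N) :
    ∃ g ∈ I, f ≤ g ∧ a ∈ g.domain ∧ ∃ y, g y = b := by
  obtain ⟨g, hg, hfg, ha⟩ := hI.2.2.1 f hf a
  obtain ⟨h, hh, hgh, y, hy⟩ := hI.2.2.2 g hg b
  exact ⟨h, hh, hfg.trans hgh, hgh.1 ha, y, hy⟩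

theorem exists_directedOn_exhausting [Countable M] [Countable N] (hI : IsPartialIsoSystem I) :
    ∃ c ⊆ I, DirectedOn (· ≤ ·) c ∧ (∀ a, ∃ f ∈ c, a ∈ f.domain) ∧
      ∀ b, ∃ f ∈ c, ∃ y, f y = b := by
  obtain ⟨f₀, hf₀⟩ := hI.1
  obtain ⟨eM, heM⟩ := exists_surjective_nat M
  obtain ⟨eN, heN⟩ := exists_surjective_nat N
  choose next hnext hle hdom hrange using
    fun (f : I) (n : ℕ) => hI.exists_extend f.2 (eM n) (eN n)
  let F : ℕ → I := fun n => Nat.rec ⟨f₀, hf₀⟩ (fun n f => ⟨next f n, hnext f n⟩) n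
  have hF : Monotone fun n => (F n).1 := monotone_nat_of_le_succ fun n => hle (F n) n
  refine ⟨Set.range fun n => (F n).1, Set.range_subset_iff.2 fun n => (F n).2,
    directedOn_range.2 hF.directed_le, fun a => ?_, fun b => ?_⟩
  · obtain ⟨n, rfl⟩ := heM a
    exact ⟨_, ⟨n + 1, rfl⟩, hdom (F n) n⟩
  · obtain ⟨n, rfl⟩ := heN b
    exact ⟨_, ⟨n + 1, rfl⟩, hrange (F n) n⟩

theorem nonempty_linearEquiv [Countable M] [Countable N] (hI : IsPartialIsoSystem I) :
    Nonempty (M ≃ₗ[R] N) := by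
  obtain ⟨c, hcI, hc, hdom, hrange⟩ := hI.exists_directedOn_exhausting
  exact LinearPMap.nonempty_linearEquiv_of_directedOn hc (fun f hf => hI.2.1 f (hcI hf))
    hdom hrange

end UlmW.IsPartialIsoSystem

theorem statement_15 {G H : Type u} [AddCommGroup G] [AddCommGroup H]
    [Countable G] [Countable H]
    (I : Set (G →ₗ.[ℤ] H)) (hI : IsPartialIsoSystem I) :
    Nonempty (G ≃+ H) :=
  hI.nonempty_linearEquiv.map LinearEquiv.toAddEquiv

end
end
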